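/- Let γ : ℝ → EuclideanSpace ℝ (Fin 3) be continuous on [0,1] with γ(0) = γ(1) and ‖γ(t)‖ = 1 for all t ∈ [0,1]. If the origin lies in the convex hull of the image of γ, i.e., 0 ∈ convexHull ℝ (γ '' Set.Icc 0 1), then the length of γ is at least 2π: ENNReal.ofReal (2 * π) ≤ eVariationOn γ (Set.Icc 0 1). -/

import Mathlib

open RealInnerProductSpace Real

/-!
If the curve had length `L < 2π`, cut it at a parameter `c` where half of its length is used up
(the variation function of a continuous curve is continuous). Since the length of a spherical
curve dominates the angle between its endpoints, every point `x` of the curve satisfies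
`∠(x, γ 0) + ∠(x, γ c) ≤ L / 2 < π`, and this forces `⟪x, γ 0 + γ c⟫ > 0`: otherwise `x` would be
at least as far from `γ c` as from the antipode `-γ 0`, and the two angles would add up to at
least `π`. So the curve lies in an open half-space, whose convex hull misses the origin.
-/

open Set Filter Topology InnerProductGeometry

theorem sum_dist_le_toReal_eVariationOn {α E : Type*} [LinearOrder α] [PseudoMetricSpace E]
    {f : α → E} {s : Set α} (hf : eVariationOn f s ≠ ⊤) {n : ℕ} {u : ℕ → α} (hu : Monotone u)
    (us : ∀ i, u i ∈ s) :
    ∑ i ∈ Finset.range n, dist (f (u (i + 1))) (f (u i)) ≤ (eVariationOn f s).toReal := by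
  rw [← ENNReal.ofReal_le_iff_le_toReal hf, ENNReal.ofReal_sum_of_nonneg fun _ _ => dist_nonneg]
  simpa only [edist_dist] using eVariationOn.sum_le (f := f) (n := n) hu us

theorem exists_monotone_partition_dist_le {E : Type*} [PseudoMetricSpace E] {f : ℝ → E}
    {a b : ℝ} (hab : a ≤ b) (hf : ContinuousOn f (Icc a b)) {δ : ℝ} (hδ : 0 < δ) :
    ∃ (n : ℕ) (u : ℕ → ℝ), Monotone u ∧ (∀ i, u i ∈ Icc a b) ∧ u 0 = a ∧ u n = b ∧
      ∀ i, dist (f (u (i + 1))) (f (u i)) ≤ δ := by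
  obtain ⟨τ, hτ, hfτ⟩ := Metric.uniformContinuousOn_iff.1
    (isCompact_Icc.uniformContinuousOn_of_continuous hf) δ hδ
  have hmem : ∀ i : ℕ, min (a + i * (τ / 2)) b ∈ Icc a b := fun i =>
    ⟨le_min (by simp only [le_add_iff_nonneg_right]; positivity) hab, min_le_right _ _⟩
  refine ⟨⌈(b - a) / (τ / 2)⌉₊, fun i => min (a + i * (τ / 2)) b, fun i j hij => ?_, hmem,
    by simp [hab], min_eq_right ?_, fun i => (hfτ _ (hmem _) _ (hmem _) ?_).le⟩
  · dsimp only
    gcongr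
  · rw [← sub_le_iff_le_add', ← div_le_iff₀ (by positivity)]
    exact Nat.le_ceil _
  · refine (abs_min_sub_min_le_max _ _ _ _).trans_lt ?_
    push_cast
    rw [sub_self, abs_zero, add_mul, one_mul, add_sub_add_left_eq_sub, add_sub_cancel_left,
      abs_of_pos (by positivity), max_eq_left (by positivity)]
    linarith

theorem LocallyBoundedVariationOn.continuousOn_variationOnFromTo {α E : Type*} [LinearOrder α]
    [TopologicalSpace α] [OrderTopology α] [PseudoMetricSpace E] {f : α → E} {s : Set α}
    (hf : LocallyBoundedVariationOn f s) (hcont : ContinuousOn f s) {a : α} (ha : a ∈ s) :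
    ContinuousOn (variationOnFromTo f s a) s := by
  intro b hb
  have hleft := variationOnFromTo.tendsto_left ha hb hf ((hcont b hb).mono inter_subset_left)
  have hright := variationOnFromTo.tendsto_right ha hb hf ((hcont b hb).mono inter_subset_left)
  rw [dist_self, sub_zero] at hleft
  rw [dist_self, add_zero] at hright
  refine ((ContinuousWithinAt.union hleft hright).insert).mono fun x hx => ?_
  rcases lt_trichotomy x b with h | rfl | h
  · exact Or.inr (Or.inl ⟨hx, h⟩)
  · exact Or.inl rfl
  · exact Or.inr (Or.inr ⟨hx, h⟩)

section Angle

variable {V : Type*} [NormedAddCommGroup V] [InnerProductSpace ℝ V]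

theorem norm_sub_eq_two_mul_sin_angle_div_two {x y : V} (hx : ‖x‖ = 1) (hy : ‖y‖ = 1) :
    ‖x - y‖ = 2 * sin (angle x y / 2) := by
  have hinner : ⟪x, y⟫ = cos (angle x y) := by
    simpa [hx, hy] using (cos_angle_mul_norm_mul_norm x y).symm
  have hcos : cos (angle x y) = 1 - 2 * sin (angle x y / 2) ^ 2 := by
    have h := cos_two_mul (angle x y / 2)
    rw [mul_div_cancel₀ _ two_ne_zero] at h
    linarith [cos_sq_add_sin_sq (angle x y / 2)]
  have hsin : 0 ≤ sin (angle x y / 2) :=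
    sin_nonneg_of_nonneg_of_le_pi (by linarith [angle_nonneg x y])
      (by linarith [angle_le_pi x y, pi_pos])
  refine (sq_eq_sq₀ (norm_nonneg _) (by positivity)).1 ?_
  rw [norm_sub_sq_real, hx, hy, hinner, hcos]
  ring

theorem angle_le_norm_sub_add_pow_three {x y : V} (hx : ‖x‖ = 1) (hy : ‖y‖ = 1) :
    angle x y ≤ ‖x - y‖ + ‖x - y‖ ^ 3 / 3 := by
  set θ := angle x y
  have hchord := norm_sub_eq_two_mul_sin_angle_div_two hx hy
  have hθ : 0 ≤ θ := angle_nonneg x y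
  have hθ_le_two_chord : θ ≤ 2 * ‖x - y‖ := by
    have := mul_le_sin (x := θ / 2) (by linarith) (by linarith [angle_le_pi x y])
    have h4 : π ≤ 4 := pi_le_four
    rw [hchord]
    calc θ = π * (2 / π * (θ / 2)) := by field_simp
      _ ≤ 4 * sin (θ / 2) := by gcongr
      _ = 2 * (2 * sin (θ / 2)) := by ring
  have hcube := sin_ge_sub_cube (x := θ / 2) (by linarith)
  have hpow : θ ^ 3 ≤ (2 * ‖x - y‖) ^ 3 := by gcongr
  nlinarith

theorem angle_le_range_sum_angle {u : ℕ → V} (hu : u 0 ≠ 0) (n : ℕ) :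
    angle (u 0) (u n) ≤ ∑ i ∈ Finset.range n, angle (u i) (u (i + 1)) := by
  induction n with
  | zero => simp [angle_self hu]
  | succ n ih =>
    rw [Finset.sum_range_succ]
    linarith [angle_le_angle_add_angle (u 0) (u n) (u (n + 1))]

theorem inner_add_pos_of_angle_add_angle_lt_pi {x p q : V} (hpq : ‖p‖ = ‖q‖)
    (h : angle x p + angle x q < π) : 0 < ⟪x, p + q⟫ := by
  by_contra! hle
  have : angle x (-p) ≤ angle x q := by
    rw [angle, angle, inner_neg_right, norm_neg, hpq]
    refine arccos_le_arccos (div_le_div_of_nonneg_right ?_ (by positivity))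
    rw [inner_add_right] at hle
    linarith
  rw [angle_neg_right] at this
  linarith

theorem angle_le_eVariationOn {γ : ℝ → V} {a b : ℝ} (hab : a ≤ b)
    (hγ : ContinuousOn γ (Icc a b)) (hunit : ∀ t ∈ Icc a b, ‖γ t‖ = 1) :
    ENNReal.ofReal (angle (γ a) (γ b)) ≤ eVariationOn γ (Icc a b) := by
  rcases eq_or_ne (eVariationOn γ (Icc a b)) ⊤ with hV | hV
  · simp [hV]
  rw [ENNReal.ofReal_le_iff_le_toReal hV]
  set L := (eVariationOn γ (Icc a b)).toReal
  have hbound : ∀ δ > 0, angle (γ a) (γ b) ≤ (1 + δ ^ 2) * L := by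
    intro δ hδ
    obtain ⟨n, u, hmono, hmem, hu0, hun, hdist⟩ := exists_monotone_partition_dist_le hab hγ hδ
    have hunit' : ∀ i, ‖γ (u i)‖ = 1 := fun i => hunit _ (hmem i)
    have hstep : ∀ i, angle (γ (u i)) (γ (u (i + 1))) ≤
        (1 + δ ^ 2) * dist (γ (u (i + 1))) (γ (u i)) := by
      intro i
      have hc := hdist i
      rw [dist_eq_norm] at hc ⊢
      rw [angle_comm]
      refine (angle_le_norm_sub_add_pow_three (hunit' _) (hunit' _)).trans ?_
      nlinarith [pow_le_pow_left₀ (norm_nonneg _) hc 2, norm_nonneg (γ (u (i + 1)) - γ (u i))]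
    calc angle (γ a) (γ b) = angle (γ (u 0)) (γ (u n)) := by rw [hu0, hun]
      _ ≤ ∑ i ∈ Finset.range n, angle (γ (u i)) (γ (u (i + 1))) :=
        angle_le_range_sum_angle (u := γ ∘ u) (by simp [← norm_ne_zero_iff, hunit']) n
      _ ≤ ∑ i ∈ Finset.range n, (1 + δ ^ 2) * dist (γ (u (i + 1))) (γ (u i)) :=
        Finset.sum_le_sum fun i _ => hstep i
      _ = (1 + δ ^ 2) * ∑ i ∈ Finset.range n, dist (γ (u (i + 1))) (γ (u i)) :=
        (Finset.mul_sum ..).symm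
      _ ≤ (1 + δ ^ 2) * L := by gcongr; exact sum_dist_le_toReal_eVariationOn hV hmono hmem
  have hlim : Tendsto (fun δ : ℝ => (1 + δ ^ 2) * L) (𝓝[>] 0) (𝓝 L) := by
    have hcont : Continuous fun δ : ℝ => (1 + δ ^ 2) * L := by fun_prop
    exact tendsto_nhdsWithin_of_tendsto_nhds (hcont.tendsto' 0 L (by simp))
  exact ge_of_tendsto hlim (eventually_nhdsWithin_of_forall hbound)

theorem exists_inner_pos_of_eVariationOn_lt_two_pi {γ : ℝ → V}
    (hcont : ContinuousOn γ (Icc 0 1)) (hclosed : γ 0 = γ 1)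
    (hsphere : ∀ t ∈ Icc (0 : ℝ) 1, ‖γ t‖ = 1)
    (hlen : eVariationOn γ (Icc 0 1) < ENNReal.ofReal (2 * π)) :
    ∃ m : V, ∀ t ∈ Icc (0 : ℝ) 1, 0 < ⟪m, γ t⟫ := by
  set s := Icc (0 : ℝ) 1
  have hbv : BoundedVariationOn γ s := hlen.ne_top
  have h0 : (0 : ℝ) ∈ s := left_mem_Icc.2 zero_le_one
  have h1 : (1 : ℝ) ∈ s := right_mem_Icc.2 zero_le_one
  set L := (eVariationOn γ s).toReal
  have hL : L < 2 * π := ENNReal.toReal_lt_of_lt_ofReal hlen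
  have hv1 : variationOnFromTo γ s 0 1 = L := by
    rw [variationOnFromTo.eq_of_le _ _ zero_le_one, inter_self]
  have hadd : ∀ x ∈ s, ∀ y ∈ s, ∀ z ∈ s,
      variationOnFromTo γ s x y + variationOnFromTo γ s y z = variationOnFromTo γ s x z :=
    fun x hx y hy z hz => variationOnFromTo.add hbv.locallyBoundedVariationOn hx hy hz
  have hangle : ∀ x ∈ s, ∀ y ∈ s, x ≤ y → angle (γ x) (γ y) ≤ variationOnFromTo γ s x y := by
    intro x hx y hy hxy
    have hsub : Icc x y ⊆ s := Icc_subset_Icc hx.1 hy.2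
    rw [variationOnFromTo.eq_of_le _ _ hxy, inter_eq_right.2 hsub,
      ← ENNReal.ofReal_le_iff_le_toReal (hbv.mono hsub)]
    exact angle_le_eVariationOn hxy (hcont.mono hsub) fun t ht => hsphere t (hsub ht)
  obtain ⟨c, hc, hvc⟩ : ∃ c ∈ s, variationOnFromTo γ s 0 c = L / 2 := by
    refine intermediate_value_Icc zero_le_one
      (hbv.locallyBoundedVariationOn.continuousOn_variationOnFromTo hcont h0) ?_
    rw [variationOnFromTo.self, hv1]
    exact ⟨by positivity, by linarith [ENNReal.toReal_nonneg (a := eVariationOn γ s)]⟩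
  refine ⟨γ 0 + γ c, fun t ht => ?_⟩
  rw [real_inner_comm]
  refine inner_add_pos_of_angle_add_angle_lt_pi (by rw [hsphere 0 h0, hsphere c hc]) ?_
  rcases le_total t c with htc | hct
  · linarith [hadd 0 h0 t ht c hc, angle_comm (γ t) (γ 0), hangle 0 h0 t ht ht.1,
      hangle t ht c hc htc]
  · have hlast := hangle t ht 1 h1 ht.2
    rw [← hclosed] at hlast
    linarith [hadd 0 h0 c hc 1 h1, hadd c hc t ht 1 h1, angle_comm (γ t) (γ c),
      hangle c hc t ht hct]

end Angle

/-- A closed curve on the unit sphere `S² ⊆ ℝ³` whose convex hull contains the center of the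
sphere has length at least `2π`. -/
theorem spherical_curve_through_center_length_ge
    (γ : ℝ → EuclideanSpace ℝ (Fin 3))
    (hcont : ContinuousOn γ (Set.Icc 0 1)) (hclosed : γ 0 = γ 1)
    (hsphere : ∀ t ∈ Set.Icc (0 : ℝ) 1, ‖γ t‖ = 1)
    (hhull : (0 : EuclideanSpace ℝ (Fin 3)) ∈ convexHull ℝ (γ '' Set.Icc 0 1)) :
    ENNReal.ofReal (2 * π) ≤ eVariationOn γ (Set.Icc 0 1) := by
  by_contra! hlen
  obtain ⟨m, hm⟩ := exists_inner_pos_of_eVariationOn_lt_two_pi hcont hclosed hsphere hlen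
  have hsub : γ '' Icc 0 1 ⊆ {y | 0 < ⟪m, y⟫} := by
    rintro _ ⟨t, ht, rfl⟩
    exact hm t ht
  have := convexHull_min hsub (convex_halfSpace_gt (innerₛₗ ℝ m).isLinear 0) hhull
  simp at this
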